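/- For any μ ∈ [0,1]^d, the function h(α) := Σ_{i=1}^d α μ_i / (1 − μ_i + α μ_i) is non-decreasing and concave on (0,∞). In particular, for any frame U ∈ ℝ^{d×n}, positive z ∈ ℝ^n and T ⊆ [n], the proxy function h(α) := Σ_{j∈T} lev^U_j(z ∘ (1_{T^c} + α·1_T)) is non-decreasing and concave on (0,∞). -/

import Mathlib

open Matrix BigOperators

/-- Leverage scores: `lev^U_j(z) = z_j · u_jᵀ (U Z Uᵀ)⁻¹ u_j`. -/
noncomputable def lev {d n : ℕ} (U : Matrix (Fin d) (Fin n) ℝ) (z : Fin n → ℝ)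
    (j : Fin n) : ℝ :=
  z j * ((fun i => U i j) ⬝ᵥ ((U * Matrix.diagonal z * Uᵀ)⁻¹ *ᵥ fun i => U i j))

/-- `scale z T α = z ∘ (1_{Tᶜ} + α·1_T)`. -/
def scale {n : ℕ} (z : Fin n → ℝ) (T : Finset (Fin n)) (α : ℝ) : Fin n → ℝ :=
  fun j => if j ∈ T then α * z j else z j

/-- The proxy function `h(α) = Σ_{j∈T} lev^U_j(z ∘ (1_{Tᶜ} + α·1_T))`. -/
noncomputable def proxyh {d n : ℕ} (U : Matrix (Fin d) (Fin n) ℝ) (z : Fin n → ℝ)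
    (T : Finset (Fin n)) (α : ℝ) : ℝ :=
  ∑ j ∈ T, lev U (scale z T α) j

/-!
Write `U diag(z ∘ (1_{Tᶜ} + α 1_T)) Uᵀ = A + α B`, where `A` and `B` collect the columns of `U`
outside and inside `T`, so that `h(α) = α tr((A + α B)⁻¹ B)`. With `R = (A + B)^{1/2}` and
`C = R⁻¹ B R⁻¹` we get `0 ≤ C ≤ 1` and `A + α B = R (1 + (α - 1) C) R`, hence, in an eigenbasis
of `C` with eigenvalues `μ_i ∈ [0, 1]`, `h(α) = Σ_i α μ_i / (1 - μ_i + α μ_i)`. This reduces the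
frame statement to the scalar one, which holds termwise.
-/

open Set

noncomputable def spectralProxy {ι : Type*} [Fintype ι] (μ : ι → ℝ) (α : ℝ) : ℝ :=
  ∑ i, α * μ i / (1 - μ i + α * μ i)

lemma one_sub_add_mul_pos {μ α : ℝ} (hμ : μ ∈ Icc (0 : ℝ) 1) (hα : 0 < α) :
    0 < 1 - μ + α * μ := by
  nlinarith [hμ.1, hμ.2, mul_nonneg hα.le hμ.1]

lemma monotoneOn_mul_div_one_sub_add_mul {μ : ℝ} (hμ : μ ∈ Icc (0 : ℝ) 1) :
    MonotoneOn (fun α : ℝ => α * μ / (1 - μ + α * μ)) (Ioi 0) := by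
  intro x hx y hy hxy
  rw [div_le_div_iff₀ (one_sub_add_mul_pos hμ hx) (one_sub_add_mul_pos hμ hy)]
  nlinarith [mul_nonneg hμ.1 (sub_nonneg.2 hμ.2), sub_nonneg.2 hxy]

lemma concaveOn_mul_div_one_sub_add_mul {μ : ℝ} (hμ : μ ∈ Icc (0 : ℝ) 1) :
    ConcaveOn ℝ (Ioi 0) (fun α : ℝ => α * μ / (1 - μ + α * μ)) := by
  refine ⟨convex_Ioi 0, fun x hx y hy a b ha hb hab => ?_⟩
  have hxy : a • x + b • y ∈ Ioi (0 : ℝ) := convex_Ioi 0 hx hy ha hb hab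
  simp only [mem_Ioi, smul_eq_mul] at hx hy hxy ⊢
  obtain rfl : b = 1 - a := by linarith
  have hDx := one_sub_add_mul_pos hμ hx
  have hDy := one_sub_add_mul_pos hμ hy
  rw [← mul_div_assoc, ← mul_div_assoc, div_add_div _ _ hDx.ne' hDy.ne',
    div_le_div_iff₀ (by positivity) (one_sub_add_mul_pos hμ hxy)]
  -- the denominator is affine in `α`, so the cross-multiplied gap is `a b (1 - μ) μ² (x - y)²`
  nlinarith [mul_nonneg (mul_nonneg (mul_nonneg (mul_nonneg ha hb) (sub_nonneg.2 hμ.2))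
    (sq_nonneg μ)) (sq_nonneg (x - y))]

lemma monotoneOn_finset_sum {ι α β : Type*} [Preorder α] [AddCommMonoid β] [PartialOrder β]
    [IsOrderedAddMonoid β] {s : Set α} (t : Finset ι) {f : ι → α → β}
    (hf : ∀ i ∈ t, MonotoneOn (f i) s) : MonotoneOn (fun x => ∑ i ∈ t, f i x) s :=
  fun _ hx _ hy hxy => Finset.sum_le_sum fun i hi => hf i hi hx hy hxy

lemma concaveOn_finset_sum {ι 𝕜 E β : Type*} [Semiring 𝕜] [PartialOrder 𝕜] [AddCommMonoid E]
    [AddCommMonoid β] [PartialOrder β] [IsOrderedAddMonoid β] [SMul 𝕜 E] [Module 𝕜 β]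
    [PosSMulMono 𝕜 β] {s : Set E} (hs : Convex 𝕜 s) (t : Finset ι) {f : ι → E → β}
    (hf : ∀ i ∈ t, ConcaveOn 𝕜 s (f i)) : ConcaveOn 𝕜 s (fun x => ∑ i ∈ t, f i x) := by
  rw [← Finset.sum_fn]
  exact Finset.sum_induction _ _ (fun _ _ => ConcaveOn.add) (concaveOn_const 0 hs) hf

lemma monotoneOn_spectralProxy {ι : Type*} [Fintype ι] {μ : ι → ℝ}
    (hμ : ∀ i, μ i ∈ Icc (0 : ℝ) 1) :
    MonotoneOn (spectralProxy μ) (Ioi 0) :=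
  monotoneOn_finset_sum _ fun i _ => monotoneOn_mul_div_one_sub_add_mul (hμ i)

lemma concaveOn_spectralProxy {ι : Type*} [Fintype ι] {μ : ι → ℝ}
    (hμ : ∀ i, μ i ∈ Icc (0 : ℝ) 1) :
    ConcaveOn ℝ (Ioi 0) (spectralProxy μ) :=
  concaveOn_finset_sum (convex_Ioi 0) _ fun i _ => concaveOn_mul_div_one_sub_add_mul (hμ i)

namespace Matrix

variable {ι : Type*} [Fintype ι] [DecidableEq ι]

lemma trace_sandwich_inv_mul_sandwich {R : Type*} [CommRing R] {P Q : Matrix ι ι R}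
    (hP : IsUnit P) (hQ : IsUnit Q) (X Y : Matrix ι ι R) :
    trace ((P * X * Q)⁻¹ * (P * Y * Q)) = trace (X⁻¹ * Y) := by
  have hPdet : IsUnit P.det := (isUnit_iff_isUnit_det P).mp hP
  rw [mul_inv_rev, mul_inv_rev, ← trace_conj' hQ (X⁻¹ * Y)]
  simp only [Matrix.mul_assoc, nonsing_inv_mul_cancel_left _ _ hPdet]

lemma trace_inv_diagonal_mul_diagonal {K : Type*} [Field K] {v w : ι → K} (hv : ∀ i, v i ≠ 0) :
    trace ((diagonal v)⁻¹ * diagonal w) = ∑ i, w i / v i := by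
  have : (diagonal v)⁻¹ = diagonal v⁻¹ :=
    inv_eq_left_inv (by rw [diagonal_mul_diagonal, ← diagonal_one]; congr; ext i; simp [hv i])
  simp [this, trace_diagonal, div_eq_inv_mul]

lemma IsHermitian.trace_inv_one_add_smul_mul {C : Matrix ι ι ℝ} (hC : C.IsHermitian) {c : ℝ}
    (hc : ∀ i, 1 + c * hC.eigenvalues i ≠ 0) :
    trace ((1 + c • C)⁻¹ * C) = ∑ i, hC.eigenvalues i / (1 + c * hC.eigenvalues i) := by
  set V : Matrix ι ι ℝ := ↑hC.eigenvectorUnitary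
  have hV : IsUnit V := (Unitary.toUnits hC.eigenvectorUnitary).isUnit
  have hVinv : V⁻¹ = star V := inv_eq_left_inv (Unitary.coe_star_mul_self _)
  set μ := hC.eigenvalues
  have hspec : C = V * diagonal μ * V⁻¹ := by
    simpa [hVinv] using hC.spectral_theorem
  have hshift : 1 + c • C = V * diagonal (fun i => 1 + c * μ i) * V⁻¹ := by
    have : diagonal (fun i => 1 + c * μ i) = 1 + c • diagonal μ := by
      rw [← diagonal_one, ← diagonal_smul, diagonal_add]; rfl
    rw [this, mul_add, add_mul, mul_one, mul_nonsing_inv _ ((isUnit_iff_isUnit_det V).mp hV),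
      mul_smul_comm, smul_mul_assoc, ← hspec]
  calc trace ((1 + c • C)⁻¹ * C)
      = trace ((V * diagonal (fun i => 1 + c * μ i) * V⁻¹)⁻¹ * (V * diagonal μ * V⁻¹)) := by
        rw [← hshift, ← hspec]
    _ = _ := by
      rw [trace_sandwich_inv_mul_sandwich hV (isUnit_nonsing_inv_iff.mpr hV),
        trace_inv_diagonal_mul_diagonal hc]

open scoped MatrixOrder

lemma PosSemidef.eigenvalues_mem_Icc {C : Matrix ι ι ℝ} (hC : C.PosSemidef)
    (hC1 : (1 - C).PosSemidef) (i : ι) : hC.isHermitian.eigenvalues i ∈ Icc (0 : ℝ) 1 := by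
  refine ⟨hC.eigenvalues_nonneg i, ?_⟩
  have hle : C ≤ algebraMap ℝ (Matrix ι ι ℝ) 1 := by rwa [map_one, le_iff]
  exact (le_algebraMap_iff_spectrum_le hC.isHermitian.isSelfAdjoint).mp hle _
    (hC.isHermitian.eigenvalues_mem_spectrum_real i)

lemma exists_trace_inv_add_smul_mul_eq {A B : Matrix ι ι ℝ} (hA : A.PosSemidef)
    (hB : B.PosSemidef) (hAB : (A + B).PosDef) :
    ∃ C : Matrix ι ι ℝ, C.PosSemidef ∧ (1 - C).PosSemidef ∧
      ∀ α : ℝ, trace ((A + α • B)⁻¹ * B) = trace ((1 + (α - 1) • C)⁻¹ * C) := by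
  set R := CFC.sqrt (A + B)
  have hRR : R * R = A + B := CFC.sqrt_mul_sqrt_self _ hAB.posSemidef.nonneg
  have hR : IsUnit R := (CFC.isUnit_sqrt_iff _ hAB.posSemidef.nonneg).mpr hAB.isUnit
  have hRdet : IsUnit R.det := (isUnit_iff_isUnit_det R).mp hR
  have hRinvH : (R⁻¹)ᴴ = R⁻¹ :=
    (nonneg_iff_posSemidef.mp (CFC.sqrt_nonneg (A + B))).isHermitian.inv
  have hsandwich : ∀ X, R * (R⁻¹ * X * R⁻¹) * R = X := fun X => by
    simp only [Matrix.mul_assoc, mul_nonsing_inv_cancel_left _ _ hRdet, nonsing_inv_mul _ hRdet,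
      Matrix.mul_one]
  have hone : R⁻¹ * (A + B) * R⁻¹ = 1 := by
    rw [← hRR, Matrix.mul_assoc, Matrix.mul_assoc, nonsing_inv_mul_cancel_left _ _ hRdet,
      mul_nonsing_inv _ hRdet]
  set C := R⁻¹ * B * R⁻¹
  refine ⟨C, ?_, ?_, fun α => ?_⟩
  · have hC := hB.conjTranspose_mul_mul_same R⁻¹
    rwa [hRinvH] at hC
  · have h1C : 1 - C = (R⁻¹)ᴴ * A * R⁻¹ := by
      rw [← hone, hRinvH, Matrix.mul_add, Matrix.add_mul, add_sub_cancel_right]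
    exact h1C ▸ hA.conjTranspose_mul_mul_same R⁻¹
  · have hM : A + α • B = R * (1 + (α - 1) • C) * R := by
      rw [Matrix.mul_add, Matrix.add_mul, Matrix.mul_one, hRR, mul_smul_comm, smul_mul_assoc,
        hsandwich, sub_smul, one_smul]
      abel
    calc trace ((A + α • B)⁻¹ * B) = trace ((R * (1 + (α - 1) • C) * R)⁻¹ * (R * C * R)) := by
          rw [hsandwich, hM]
      _ = trace ((1 + (α - 1) • C)⁻¹ * C) := trace_sandwich_inv_mul_sandwich hR hR _ _

lemma exists_eqOn_mul_trace_inv_add_smul_mul {A B : Matrix ι ι ℝ} (hA : A.PosSemidef)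
    (hB : B.PosSemidef) (hAB : (A + B).PosDef) :
    ∃ μ : ι → ℝ, (∀ i, μ i ∈ Icc (0 : ℝ) 1) ∧
      EqOn (fun α => α * trace ((A + α • B)⁻¹ * B)) (spectralProxy μ) (Ioi 0) := by
  obtain ⟨C, hC, hC1, htrace⟩ := exists_trace_inv_add_smul_mul_eq hA hB hAB
  refine ⟨_, hC.eigenvalues_mem_Icc hC1, fun α hα => ?_⟩
  have hden (i : ι) : 1 + (α - 1) * hC.isHermitian.eigenvalues i
      = 1 - hC.isHermitian.eigenvalues i + α * hC.isHermitian.eigenvalues i := by ring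
  have hpos (i : ι) := one_sub_add_mul_pos (hC.eigenvalues_mem_Icc hC1 i) hα
  simp only [htrace, hC.isHermitian.trace_inv_one_add_smul_mul fun i => hden i ▸ (hpos i).ne',
    hden, spectralProxy, Finset.mul_sum, mul_div_assoc]

lemma vecMul_injective_of_rank_eq_card {m n K : Type*} [Fintype m] [Fintype n] [Field K]
    {U : Matrix m n K} (hU : U.rank = Fintype.card m) : Function.Injective fun v => v ᵥ* U := by
  rw [vecMul_injective_iff, linearIndependent_iff_card_eq_finrank_span, ← hU,
    rank_eq_finrank_span_row]
  rfl

lemma posSemidef_mul_diagonal_mul_transpose {m n : Type*} [Fintype m] [Fintype n] [DecidableEq n]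
    (U : Matrix m n ℝ) {w : n → ℝ} (hw : ∀ j, 0 ≤ w j) : (U * diagonal w * Uᵀ).PosSemidef :=
  (posSemidef_diagonal_iff.mpr hw).mul_mul_conjTranspose_same U

lemma posDef_mul_diagonal_mul_transpose {m n : Type*} [Fintype m] [Fintype n] [DecidableEq n]
    {U : Matrix m n ℝ} (hU : U.rank = Fintype.card m) {w : n → ℝ} (hw : ∀ j, 0 < w j) :
    (U * diagonal w * Uᵀ).PosDef :=
  (posDef_diagonal_iff.mpr hw).mul_mul_conjTranspose_same (vecMul_injective_of_rank_eq_card hU)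

lemma trace_mul_mul_diagonal_mul_transpose {m n R : Type*} [Fintype m] [Fintype n]
    [DecidableEq n] [CommRing R] (X : Matrix m m R) (U : Matrix m n R) (w : n → R) :
    trace (X * (U * diagonal w * Uᵀ)) =
      ∑ j, w j * ((fun i => U i j) ⬝ᵥ (X *ᵥ fun i => U i j)) := by
  rw [← Matrix.mul_assoc, trace_mul_comm, ← Matrix.mul_assoc, ← Matrix.mul_assoc]
  simp only [trace, diag, mul_diagonal]
  simp only [transpose_apply, mul_apply, dotProduct, mulVec, Finset.mul_sum, Finset.sum_mul]
  exact Finset.sum_congr rfl fun j _ => Finset.sum_comm.trans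
    (Finset.sum_congr rfl fun i _ => Finset.sum_congr rfl fun k _ => by ring)

end Matrix

lemma sum_lev_eq_trace {d n : ℕ} (U : Matrix (Fin d) (Fin n) ℝ) (w : Fin n → ℝ)
    (T : Finset (Fin n)) :
    ∑ j ∈ T, lev U w j = trace ((U * diagonal w * Uᵀ)⁻¹ *
      (U * diagonal (fun j => if j ∈ T then w j else 0) * Uᵀ)) := by
  rw [trace_mul_mul_diagonal_mul_transpose]
  simp only [ite_mul, zero_mul, Finset.sum_ite_mem, Finset.univ_inter]
  rfl

lemma exists_eqOn_proxyh_spectralProxy {d n : ℕ} {U : Matrix (Fin d) (Fin n) ℝ}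
    (hU : U.rank = d) {z : Fin n → ℝ} (hz : ∀ j, 0 < z j) (T : Finset (Fin n)) :
    ∃ μ : Fin d → ℝ, (∀ i, μ i ∈ Icc (0 : ℝ) 1) ∧
      EqOn (proxyh U z T) (spectralProxy μ) (Ioi 0) := by
  set zT : Fin n → ℝ := fun j => if j ∈ T then z j else 0
  set A := U * diagonal (scale z T 0) * Uᵀ
  set B := U * diagonal zT * Uᵀ
  have hscale (α : ℝ) : U * diagonal (scale z T α) * Uᵀ = A + α • B := by
    have : scale z T α = fun j => scale z T 0 j + (α • zT) j := by
      ext j; by_cases hj : j ∈ T <;> simp [scale, zT, hj]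
    rw [this, ← diagonal_add, diagonal_smul, Matrix.mul_add, Matrix.add_mul, Matrix.mul_smul,
      Matrix.smul_mul]
  have hrestrict (α : ℝ) : (fun j => if j ∈ T then scale z T α j else 0) = α • zT := by
    ext j; by_cases hj : j ∈ T <;> simp [scale, zT, hj]
  have hA : A.PosSemidef := posSemidef_mul_diagonal_mul_transpose U fun j => by
    by_cases hj : j ∈ T <;> simp [scale, hj, (hz j).le]
  have hB : B.PosSemidef := posSemidef_mul_diagonal_mul_transpose U fun j => by
    by_cases hj : j ∈ T <;> simp [zT, hj, (hz j).le]
  have hAB : (A + B).PosDef := by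
    rw [← one_smul ℝ B, ← hscale]
    exact posDef_mul_diagonal_mul_transpose (by rwa [Fintype.card_fin]) fun j => by
      by_cases hj : j ∈ T <;> simp [scale, hj, hz j]
  obtain ⟨μ, hμ, hEq⟩ := exists_eqOn_mul_trace_inv_add_smul_mul hA hB hAB
  refine ⟨μ, hμ, fun α hα => ?_⟩
  rw [← hEq hα, proxyh, sum_lev_eq_trace, hrestrict, hscale, diagonal_smul, Matrix.mul_smul,
    Matrix.smul_mul, Matrix.mul_smul, trace_smul, smul_eq_mul]

/-- For any `μ ∈ [0,1]^d`, `α ↦ Σ_i α μ_i/(1−μ_i+αμ_i)` is non-decreasing and concave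
on `(0,∞)`; in particular, the frame-scaling proxy function is non-decreasing and
concave on `(0,∞)`. -/
theorem proxy_monotone_concave :
    (∀ (d : ℕ) (μ : Fin d → ℝ), (∀ i, μ i ∈ Set.Icc (0 : ℝ) 1) →
      MonotoneOn (fun α : ℝ => ∑ i, α * μ i / (1 - μ i + α * μ i)) (Set.Ioi 0) ∧
      ConcaveOn ℝ (Set.Ioi 0) (fun α : ℝ => ∑ i, α * μ i / (1 - μ i + α * μ i))) ∧
    (∀ (d n : ℕ) (U : Matrix (Fin d) (Fin n) ℝ), U.rank = d →
      ∀ (z : Fin n → ℝ), (∀ j, 0 < z j) → ∀ T : Finset (Fin n),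
      MonotoneOn (proxyh U z T) (Set.Ioi 0) ∧
      ConcaveOn ℝ (Set.Ioi 0) (proxyh U z T)) := by
  refine ⟨fun _ _ hμ => ⟨monotoneOn_spectralProxy hμ, concaveOn_spectralProxy hμ⟩,
    fun _ _ _ hU _ hz T => ?_⟩
  obtain ⟨μ, hμ, hEq⟩ := exists_eqOn_proxyh_spectralProxy hU hz T
  exact ⟨(monotoneOn_spectralProxy hμ).congr hEq.symm,
    (concaveOn_spectralProxy hμ).congr hEq.symm⟩
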